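/- There do not exist N, p ∈ ℕ and a primitive word v ∈ A⁺ such that σ^p(w) occurs in v^N for every w ∈ L₂(u) and 2|v| ≤ min_{a∈A}|σ^p(a)|. -/
import Mathlib


open List Filter

section Defs

variable {A : Type*}

/-- The segment `u_[i,j)` of the sequence `u`. -/
def seg (u : ℕ → A) (i j : ℕ) : List A :=
  (List.range (j - i)).map fun k => u (i + k)

/-- A substitution applied to a word, letter by letter. -/
def substWord (σ : A → List A) (w : List A) : List A := w.flatMap σ

/-- `σ^p` applied to a word. -/
def substPow (σ : A → List A) (p : ℕ) (w : List A) : List A := (substWord σ)^[p] w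

/-- A substitution is primitive if some power of it sends every letter to a word
containing every letter. -/
def IsPrimitiveSubst (σ : A → List A) : Prop :=
  ∃ k : ℕ, ∀ a b : A, a ∈ substPow σ k [b]

/-- `u` is a fixed point of `σ`: the image of every prefix of `u` is again a prefix of `u`. -/
def IsFixedPoint (σ : A → List A) (u : ℕ → A) : Prop :=
  ∀ m : ℕ, substWord σ (seg u 0 m) = seg u 0 (substWord σ (seg u 0 m)).length

/-- `u` is aperiodic under the left shift: `T^i u ≠ u` for all `i ≥ 1`. -/
def AperiodicSeq (u : ℕ → A) : Prop := ∀ i : ℕ, 1 ≤ i → (fun n => u (n + i)) ≠ u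

/-- The set `E_p` of natural `p`-cutting points. -/
def cutPoints (σ : A → List A) (u : ℕ → A) (p : ℕ) : Set ℕ :=
  { m | ∃ n : ℕ, m = (substPow σ p (seg u 0 n)).length }

/-- Unilateral recognizability of `σ` (with fixed point `u`). -/
def UnilaterallyRecognizable (σ : A → List A) (u : ℕ → A) : Prop :=
  ∃ L : ℕ, 1 ≤ L ∧ ∀ i j : ℕ,
    seg u i (i + L) = seg u j (j + L) → i ∈ cutPoints σ u 1 → j ∈ cutPoints σ u 1

/-- `L_n(u)`: the set of factors of `u` of length `n`. -/
def factors (u : ℕ → A) (n : ℕ) : Set (List A) := { w | ∃ i : ℕ, w = seg u i (i + n) }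

/-- `L(u)`: the language of `u` (including the empty word). -/
def lang (u : ℕ → A) : Set (List A) := { w | ∃ i n : ℕ, w = seg u i (i + n) }

/-- `w^n`: the concatenation of `n` copies of `w`. -/
def wpow (w : List A) (n : ℕ) : List A := (List.replicate n w).flatten

/-- A nonempty word `v` is primitive if `v = w^n` with `w` nonempty forces `w = v`. -/
def PrimitiveWord (v : List A) : Prop :=
  ∀ w : List A, w ≠ [] → ∀ n : ℕ, 1 ≤ n → v = wpow w n → w = v

/-- `g` is a gap of occurrences of `w` in `u` if every interval of length `g` in `ℤ₊`
contains an occurrence of `w`. -/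
def IsGap (u : ℕ → A) (w : List A) (g : ℕ) : Prop := ∀ i : ℕ, w <:+: seg u i (i + g)

/-- The minimal gap of a word. -/
noncomputable def minGap (u : ℕ → A) (w : List A) : ℕ := sInf { g | IsGap u w g }

/-- `g`: the maximum over `w ∈ L₂(u)` of the minimal gap of `w`. -/
noncomputable def gapConst (u : ℕ → A) : ℕ :=
  sSup { m | ∃ w ∈ factors u 2, m = minGap u w }

/-- A natural `p`-cutting `{α, σ^p(u_{i'}), …, σ^p(u_{i'+k-1}), β}` of `u_[i,i+ℓ)`. -/
def IsNaturalCutting (σ : A → List A) (u : ℕ → A) (p i ℓ : ℕ)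
    (α : List A) (i' k : ℕ) (β : List A) : Prop :=
  1 ≤ k ∧
  α <:+ substPow σ p [u (i' - 1)] ∧
  β <+: substPow σ p [u (i' + k)] ∧
  seg u i (i + ℓ) = α ++ substPow σ p (seg u i' (i' + k)) ++ β ∧
  i + α.length = (substPow σ p (seg u 0 i')).length

section Fin

variable [Fintype A] [Nonempty A] [DecidableEq A]

/-- The incidence matrix of a substitution: the `(a,b)` entry is `|σ(a)|_b`. -/
def incMatrix (σ : A → List A) : Matrix A A ℕ := Matrix.of fun a b => (σ a).count b

/-- The incidence matrix as a real matrix. -/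
noncomputable def incMatrixR (σ : A → List A) : Matrix A A ℝ :=
  Matrix.of fun a b => ((σ a).count b : ℝ)

/-- `S_p = max_{a ∈ A} |σ^p(a)|`. -/
def Sp (σ : A → List A) (p : ℕ) : ℕ :=
  Finset.univ.sup' Finset.univ_nonempty fun a => (substPow σ p [a]).length

/-- `I_p = min_{a ∈ A} |σ^p(a)|`. -/
def Ip (σ : A → List A) (p : ℕ) : ℕ :=
  Finset.univ.inf' Finset.univ_nonempty fun a => (substPow σ p [a]).length

/-- `C = ⌈(max_b β_b)/(min_b β_b)⌉` for a positive eigenvector `β`. -/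
noncomputable def Cst (β : A → ℝ) : ℕ :=
  ⌈(Finset.univ.sup' Finset.univ_nonempty β) / (Finset.univ.inf' Finset.univ_nonempty β)⌉₊

/-- `K = ⌈λ C² max{2(g+1), (#A)²}⌉`. -/
noncomputable def Kst (u : ℕ → A) (lam : ℝ) (β : A → ℝ) : ℕ :=
  ⌈lam * (Cst β : ℝ) ^ 2 *
    max (2 * ((gapConst u : ℝ) + 1)) ((Fintype.card A : ℝ) ^ 2)⌉₊

/-- The constant `p₀` of Lemma 4.2. -/
noncomputable def p0 (u : ℕ → A) (lam : ℝ) (β : A → ℝ) : ℕ :=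
  (Kst u lam β) ^ 2 * ((Cst β) ^ 4 * (Kst u lam β + 1) + 2 * (Cst β) ^ 2 + 1) *
    (∑ n ∈ Finset.Icc ((Cst β) ^ 2 * (Kst u lam β + 1) + 2)
        ((Kst u lam β + 1) * (Cst β) ^ 6 + 2 * (Cst β) ^ 4 + (Cst β) ^ 2 + 2), n) + 1

/-- The constant `L₀ = (C⁴(K+1)+2C²+1) S_{p₀}`. -/
noncomputable def L0 (σ : A → List A) (u : ℕ → A) (lam : ℝ) (β : A → ℝ) : ℕ :=
  ((Cst β) ^ 4 * (Kst u lam β + 1) + 2 * (Cst β) ^ 2 + 1) * Sp σ (p0 u lam β)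

/-- The ℓ¹ norm of a vector. -/
def l1norm (f : A → ℝ) : ℝ := ∑ a, |f a|

/-- The projective metric on positive row vectors. -/
noncomputable def projMetric (x y : A → ℝ) : ℝ :=
  Real.log ((Finset.univ.sup' Finset.univ_nonempty fun a => x a / y a) /
    (Finset.univ.inf' Finset.univ_nonempty fun a => x a / y a))

/-- The Birkhoff contraction coefficient of a matrix. -/
noncomputable def birkhoff (M : Matrix A A ℝ) : ℝ :=
  sSup { r | ∃ x y : A → ℝ, (∀ a, 0 < x a) ∧ (∀ a, 0 < y a) ∧
    LinearIndependent ℝ ![x, y] ∧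
    r = projMetric (Matrix.vecMul x M) (Matrix.vecMul y M) / projMetric x y }

end Fin

/-- Membership in the vertex set `V^*`: pairs `(xac, ybc)` of factors of `u` of length
`N + L₁ + 1` with `a ≠ b` and `|c| = L₁`. -/
def memVstar (u : ℕ → A) (N L₁ : ℕ) (p : List A × List A) : Prop :=
  ∃ (x y c : List A) (a b : A), a ≠ b ∧
    x.length = N ∧ y.length = N ∧ c.length = L₁ ∧
    p.1 = x ++ a :: c ∧ p.2 = y ++ b :: c ∧
    p.1 ∈ factors u (N + L₁ + 1) ∧ p.2 ∈ factors u (N + L₁ + 1)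

/-- An edge between representatives: there is a word `w` with `s'w` a suffix of `σ(s)` and
`t'w` a suffix of `σ(t)`. -/
def edgeRep (σ : A → List A) (p q : List A × List A) : Prop :=
  ∃ w : List A, w ≠ [] ∧ (q.1 ++ w) <:+ substWord σ p.1 ∧ (q.2 ++ w) <:+ substWord σ p.2

/-- An edge in the graph `G` between the unordered pairs represented by `p` and `q`. -/
def graphEdge (σ : A → List A) (p q : List A × List A) : Prop :=
  edgeRep σ p q ∨ edgeRep σ p q.swap ∨ edgeRep σ p.swap q ∨ edgeRep σ p.swap q.swap

/-- A representative generates a gap of natural 1-cutting points. -/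
def genGapRep (σ : A → List A) (p : List A × List A) : Prop :=
  ∃ (α β : A) (γ δ : List A),
    (σ α <:+ σ β ∧ σ α ≠ σ β) ∧
    List.Forall₂ (fun s t => σ s = σ t) γ δ ∧
    (α :: γ) <:+ substWord σ p.1 ∧ (β :: δ) <:+ substWord σ p.2

/-- The unordered pair represented by `p` generates a gap of natural 1-cutting points. -/
def genGap (σ : A → List A) (p : List A × List A) : Prop :=
  genGapRep σ p ∨ genGapRep σ p.swap

/-- The list of consecutive two-letter blocks of a word. -/
def pairsList (l : List A) : List (List A) :=
  List.zipWith (fun a b => [a, b]) l l.tail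

end Defs


section Aux

variable {A : Type*}

lemma seg_length' (u : ℕ → A) (i j : ℕ) : (seg u i j).length = j - i := by
  simp [seg]

lemma seg_getElem?' (u : ℕ → A) {i j k : ℕ} (h : k < j - i) :
    (seg u i j)[k]? = some (u (i + k)) := by
  simp [seg, List.getElem?_map, List.getElem?_range h]

lemma seg_append' (u : ℕ → A) {i j k : ℕ} (h1 : i ≤ j) (h2 : j ≤ k) :
    seg u i j ++ seg u j k = seg u i k := by
  have hk : k - i = (j - i) + (k - j) := by omega
  rw [seg, seg, seg, hk, List.range_add, List.map_append, List.map_map]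
  congr 1
  apply List.map_congr_left
  intro x hx
  simp only [Function.comp_apply]
  congr 1
  omega

lemma substWord_append' (σ : A → List A) (x y : List A) :
    substWord σ (x ++ y) = substWord σ x ++ substWord σ y := by
  simp [substWord]

lemma substPow_succ' (σ : A → List A) (p : ℕ) (w : List A) :
    substPow σ (p + 1) w = substWord σ (substPow σ p w) := by
  simp only [substPow, Function.iterate_succ_apply']

lemma substPow_append' (σ : A → List A) (p : ℕ) (x y : List A) :
    substPow σ p (x ++ y) = substPow σ p x ++ substPow σ p y := by
  induction p with
  | zero => simp [substPow]
  | succ p ih => rw [substPow_succ', substPow_succ', substPow_succ', ih, substWord_append']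

lemma substPow_nil' (σ : A → List A) (p : ℕ) : substPow σ p ([] : List A) = [] := by
  induction p with
  | zero => rfl
  | succ p ih => rw [substPow_succ', ih]; rfl

lemma fix_pow' {σ : A → List A} {u : ℕ → A} (hfix : IsFixedPoint σ u) (p m : ℕ) :
    substPow σ p (seg u 0 m) = seg u 0 (substPow σ p (seg u 0 m)).length := by
  induction p with
  | zero =>
    show seg u 0 m = seg u 0 (seg u 0 m).length
    rw [seg_length', Nat.sub_zero]
  | succ p ih =>
    have key : substPow σ (p + 1) (seg u 0 m) =
        substWord σ (seg u 0 (substPow σ p (seg u 0 m)).length) := by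
      rw [substPow_succ']
      congr 1
    rw [key]
    exact hfix _

lemma wpow_succ' (v : List A) (n : ℕ) : wpow v (n + 1) = v ++ wpow v n := by
  simp [wpow, List.replicate_succ]

lemma wpow_per' (v : List A) : ∀ (M j : ℕ), j + v.length < (wpow v M).length →
    (wpow v M)[j + v.length]? = (wpow v M)[j]? := by
  intro M
  induction M with
  | zero => intro j h; simp [wpow] at h
  | succ M ih =>
    intro j h
    rw [wpow_succ'] at h ⊢
    rw [List.length_append] at h
    have hj : j < (wpow v M).length := by omega
    have h1 : (v ++ wpow v M)[j + v.length]? = (wpow v M)[j]? := by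
      rw [List.getElem?_append_right (by omega)]
      congr 1
      omega
    rw [h1, List.getElem?_append]
    by_cases hc : j < v.length
    · rw [if_pos hc]
      obtain ⟨M', rfl⟩ : ∃ M', M = M' + 1 := by
        cases M with
        | zero => simp [wpow] at hj
        | succ M' => exact ⟨M', rfl⟩
      rw [wpow_succ', List.getElem?_append, if_pos hc]
    · rw [if_neg hc]
      push_neg at hc
      have := ih (j - v.length) (by omega)
      have hjq : j - v.length + v.length = j := by omega
      rw [hjq] at this
      exact this

lemma infix_per' {B W : List A} {q : ℕ}
    (hW : ∀ j, j + q < W.length → W[j + q]? = W[j]?)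
    (h : B <:+: W) : ∀ k, k + q < B.length → B[k + q]? = B[k]? := by
  obtain ⟨s, t, rfl⟩ := h
  intro k hk
  have key : ∀ m, m < B.length → (s ++ B ++ t)[s.length + m]? = B[m]? := by
    intro m hm
    rw [List.append_assoc, List.getElem?_append_right (Nat.le_add_right _ _),
      Nat.add_sub_cancel_left, List.getElem?_append, if_pos hm]
  have h1 := key k (by omega)
  have h2 := key (k + q) hk
  have h3 := hW (s.length + k) (by simp [List.length_append]; omega)
  rw [show s.length + k + q = s.length + (k + q) by omega] at h3
  rw [← h1, ← h2, h3]

end Aux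

/-- Lemma 2.2 (Mossé, Lemme 2.5): there do not exist `N, p ∈ ℕ` and a primitive word
`v ∈ A⁺` such that `σ^p(w)` occurs in `v^N` for every `w ∈ L₂(u)` and
`2|v| ≤ min_a |σ^p(a)|`. -/
theorem stmt_3 (A : Type*) [Fintype A] [DecidableEq A] [Nonempty A]
    (h2 : 2 ≤ Fintype.card A)
    (σ : A → List A) (hσne : ∀ a, σ a ≠ [])
    (hprim : IsPrimitiveSubst σ)
    (u : ℕ → A) (hfix : IsFixedPoint σ u) (hap : AperiodicSeq u) :
    ¬ ∃ (N p : ℕ) (v : List A), 1 ≤ N ∧ 1 ≤ p ∧ v ≠ [] ∧ PrimitiveWord v ∧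
        (∀ w ∈ factors u 2, substPow σ p w <:+: wpow v N) ∧
        2 * v.length ≤ Ip σ p := by
  rintro ⟨N, p, v, hN, hp, hv, hvprim, hocc, hlen⟩
  set q := v.length with hqdef
  have hq : 1 ≤ q := List.length_pos_iff.mpr hv
  set c : ℕ → ℕ := fun i => (substPow σ p (seg u 0 i)).length with hcdef
  have hc0 : c 0 = 0 := by
    have : seg u 0 0 = ([] : List A) := by simp [seg]
    simp [hcdef, this, substPow_nil']
  have hIp : ∀ a : A, 2 * q ≤ (substPow σ p [a]).length := fun a =>
    le_trans hlen (Finset.inf'_le _ (Finset.mem_univ a))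
  have hseg1 : ∀ i : ℕ, seg u i (i + 1) = [u i] := by
    intro i
    show List.map (fun k => u (i + k)) (List.range (i + 1 - i)) = [u i]
    rw [show i + 1 - i = 1 by omega]
    rfl
  have hstep : ∀ i : ℕ, c (i + 1) = c i + (substPow σ p [u i]).length := by
    intro i
    have : seg u 0 (i + 1) = seg u 0 i ++ seg u i (i + 1) :=
      (seg_append' u (Nat.zero_le i) (Nat.le_succ i)).symm
    simp [hcdef, this, substPow_append', hseg1 i]
  have hgap : ∀ i : ℕ, c i + 2 * q ≤ c (i + 1) := by
    intro i; rw [hstep i]; exact Nat.add_le_add_left (hIp (u i)) _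
  -- the key local periodicity
  have hloc : ∀ i n : ℕ, c i ≤ n → n + q < c (i + 2) → u (n + q) = u n := by
    intro i n hn1 hn2
    set B := substPow σ p (seg u i (i + 2)) with hBdef
    have e1 : seg u 0 (i + 2) = seg u 0 i ++ seg u i (i + 2) :=
      (seg_append' u (Nat.zero_le i) (by omega)).symm
    have hlenB : c (i + 2) = c i + B.length := by
      show (substPow σ p (seg u 0 (i + 2))).length = _
      rw [e1, substPow_append', List.length_append]
    have hsplit : seg u 0 (c i) ++ B = seg u 0 (c (i + 2)) := by
      have e2 := fix_pow' hfix p (i + 2)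
      rw [e1, substPow_append', fix_pow' hfix p i] at e2
      have hl : (seg u 0 (substPow σ p (seg u 0 i)).length ++
          substPow σ p (seg u i (i + 2))).length = c (i + 2) := by
        rw [List.length_append, seg_length', Nat.sub_zero]
        exact hlenB.symm
      rw [hl] at e2
      exact e2
    have hBseg : B = seg u (c i) (c (i + 2)) := by
      have : seg u 0 (c (i + 2)) = seg u 0 (c i) ++ seg u (c i) (c (i + 2)) :=
        (seg_append' u (Nat.zero_le _) (by omega)).symm
      rw [this] at hsplit
      exact List.append_cancel_left hsplit
    have hinf : B <:+: wpow v N := hocc _ ⟨i, rfl⟩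
    have hper := infix_per' (wpow_per' v N) hinf
    set k := n - c i with hkdef
    have hk : k + q < B.length := by
      rw [hBseg, seg_length']; omega
    have := hper k hk
    rw [hBseg, seg_getElem?' u (by rw [hBseg, seg_length'] at hk; omega),
      seg_getElem?' u (by rw [hBseg, seg_length'] at hk; omega)] at this
    have hn : c i + k = n := by omega
    have hnq : c i + (k + q) = n + q := by omega
    rw [hn, hnq] at this
    exact Option.some.inj this
  -- covering
  have hcover : ∀ n : ℕ, ∃ i, c i ≤ n ∧ n < c (i + 1) := by
    intro n
    induction n with
    | zero => exact ⟨0, by omega, by have := hgap 0; omega⟩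
    | succ n ih =>
      obtain ⟨i, h1, h2⟩ := ih
      by_cases hcase : n + 1 < c (i + 1)
      · exact ⟨i, by omega, hcase⟩
      · refine ⟨i + 1, by omega, ?_⟩
        have := hgap (i + 1)
        omega
  have hperiod : ∀ n : ℕ, u (n + q) = u n := by
    intro n
    obtain ⟨i, h1, h2⟩ := hcover n
    refine hloc i n h1 ?_
    have h3 := hgap (i + 1)
    rw [show i + 1 + 1 = i + 2 by omega] at h3
    omega
  exact hap q hq (funext hperiod)
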